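/- The inverse Sibuya process satisfies E[L_α(t)] = binom(t+α, t) - 1 for every t ∈ ℕ_0. -/

import Mathlib

/-!
Sibuya jumps are a.s. positive, so a.s. `L(t) + 1` is the number of `n ≤ t` with `σ(n) ≤ t`, and
`E[L(t)] + 1 = ∑_{n ≤ t} P(σ(n) ≤ t)`. The generating series of Sibuya(α) is `P = 1 - (1 - X)^α`,
that of `σ(n)` is `P^n` by independence, and `P^n` has no coefficients below degree `n`. Hence up to
degree `t` the geometric sum `∑_{n ≤ t} P^n` agrees with the renewal series
`(1 - P)⁻¹ = (1 - X)^(-α) = ∑ binom(α + s - 1, s) X^s`, whose coefficients up to `t` add up to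
`binom(α + t, t)` by the hockey-stick identity.
-/

open MeasureTheory ProbabilityTheory

/-- Generalized binomial coefficient `binom(x, k) = x(x-1)⋯(x-k+1)/k!` for real `x`. -/
noncomputable def gbinom (x : ℝ) (k : ℕ) : ℝ :=
  (∏ i ∈ Finset.range k, (x - i)) / (Nat.factorial k)

/-- Sibuya(α) probability mass function. -/
noncomputable def sibuya (α : ℝ) (k : ℕ) : ℝ :=
  if k = 0 then 0 else (-1 : ℝ) ^ (k - 1) * gbinom α k

open PowerSeries Finset

theorem gbinom_eq_ringChoose (x : ℝ) (k : ℕ) : gbinom x k = Ring.choose x k := by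
  rw [Ring.choose_eq_smul, ← Polynomial.aeval_eq_smeval, Polynomial.aeval_def,
    ← Polynomial.eval_map, descPochhammer_map, descPochhammer_eval_eq_prod_range, gbinom,
    smul_eq_mul, div_eq_inv_mul]

section BinomialRing

variable {R : Type*} [CommRing R] [BinomialRing R]

theorem Ring.sum_range_choose_add_sub_one (r : R) (t : ℕ) :
    ∑ s ∈ range (t + 1), Ring.choose (r + s - 1) s = Ring.choose (r + t) t := by
  induction t with
  | zero => simp
  | succ t ih =>
    rw [sum_range_succ, ih, Nat.cast_succ, ← add_assoc, add_sub_cancel_right,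
      Ring.choose_succ_succ]

-- `rescale (-1) (binomialSeries R r)` is `(1 - X) ^ r`.
theorem coeff_rescale_neg_one_binomialSeries_neg (r : R) (n : ℕ) :
    coeff n (rescale (-1) (binomialSeries R (-r))) = Ring.choose (r + n - 1) n := by
  rw [coeff_rescale, binomialSeries_coeff, smul_eq_mul, mul_one, Ring.choose_neg, Units.smul_def,
    zsmul_eq_mul, Int.cast_negOnePow_natCast, ← mul_assoc, ← mul_pow, neg_one_mul, neg_neg,
    one_pow, one_mul]

theorem rescale_neg_one_binomialSeries_mul_neg (r : R) :
    rescale (-1) (binomialSeries R r) * rescale (-1) (binomialSeries R (-r)) = 1 := by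
  rw [← map_mul, ← binomialSeries_add, add_neg_cancel, binomialSeries_zero, map_one]

end BinomialRing

theorem PowerSeries.coeff_sum_range_pow_of_one_sub_mul_eq_one {R : Type*} [CommRing R]
    {P U : R⟦X⟧} (hP : constantCoeff P = 0) (hU : (1 - P) * U = 1) {N s : ℕ} (hs : s < N) :
    coeff s (∑ n ∈ range N, P ^ n) = coeff s U := by
  obtain ⟨Q, hQ⟩ : X ^ N ∣ P ^ N := pow_dvd_pow_of_dvd (X_dvd_iff.mpr hP) N
  have hsum : ∑ n ∈ range N, P ^ n = U - X ^ N * (Q * U) := by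
    calc ∑ n ∈ range N, P ^ n = U * ((1 - P) * ∑ n ∈ range N, P ^ n) := by
          rw [← mul_assoc, mul_comm U, hU, one_mul]
      _ = U - X ^ N * (Q * U) := by rw [mul_neg_geom_sum, hQ]; ring
  rw [hsum, map_sub, coeff_X_pow_mul', if_neg (by omega), sub_zero]

noncomputable def sibuyaSeries (α : ℝ) : ℝ⟦X⟧ := mk (sibuya α)

theorem one_sub_sibuyaSeries (α : ℝ) :
    1 - sibuyaSeries α = rescale (-1) (binomialSeries ℝ α) := by
  ext (_ | k)
  · simp [sibuyaSeries, sibuya]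
  · simp [sibuyaSeries, sibuya, gbinom_eq_ringChoose, pow_succ]

theorem constantCoeff_sibuyaSeries (α : ℝ) : constantCoeff (sibuyaSeries α) = 0 := by
  simp [sibuyaSeries, ← coeff_zero_eq_constantCoeff_apply, sibuya]

theorem one_sub_sibuyaSeries_mul (α : ℝ) :
    (1 - sibuyaSeries α) * rescale (-1) (binomialSeries ℝ (-α)) = 1 := by
  rw [one_sub_sibuyaSeries, rescale_neg_one_binomialSeries_mul_neg]

theorem sum_coeff_sum_range_sibuyaSeries_pow (α : ℝ) (t : ℕ) :
    ∑ s ∈ range (t + 1), coeff s (∑ n ∈ range (t + 1), sibuyaSeries α ^ n)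
      = Ring.choose (α + t) t := by
  rw [← Ring.sum_range_choose_add_sub_one]
  refine sum_congr rfl fun s hs => ?_
  rw [coeff_sum_range_pow_of_one_sub_mul_eq_one (constantCoeff_sibuyaSeries α)
    (one_sub_sibuyaSeries_mul α) (mem_range.mp hs), coeff_rescale_neg_one_binomialSeries_neg]

theorem Nat.card_filter_range_le_eq_sSup_add_one {σ : ℕ → ℕ} (hσ : StrictMono σ) {t : ℕ}
    (h0 : σ 0 ≤ t) : #{n ∈ range (t + 1) | σ n ≤ t} = sSup {n | σ n ≤ t} + 1 := by
  set A := {n | σ n ≤ t}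
  have hbdd : BddAbove A := ⟨t, fun n hn => (hσ.id_le n).trans hn⟩
  have hmem : sSup A ∈ A := Nat.sSup_mem ⟨0, h0⟩ hbdd
  have hiff : ∀ n, σ n ≤ t ↔ n ≤ sSup A := fun n =>
    ⟨fun h => le_csSup hbdd h, fun h => (hσ.monotone h).trans hmem⟩
  have hle : sSup A ≤ t := (hσ.id_le _).trans hmem
  rw [← card_range (sSup A + 1)]
  congr 1
  ext n
  simp only [mem_filter, mem_range, hiff]
  omega

section Pgf

variable {Ω : Type*} [MeasurableSpace Ω] {μ : Measure Ω}

noncomputable def pgf (μ : Measure Ω) (f : Ω → ℕ) : ℝ⟦X⟧ := mk fun k => μ.real (f ⁻¹' {k})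

theorem coeff_pgf (f : Ω → ℕ) (k : ℕ) : coeff k (pgf μ f) = μ.real (f ⁻¹' {k}) := coeff_mk _ _

theorem pgf_zero [IsProbabilityMeasure μ] : pgf μ 0 = 1 := by
  ext k
  by_cases hk : k = 0 <;> simp [coeff_pgf, coeff_one, hk, Pi.zero_def, eq_comm]

theorem pgf_add [IsFiniteMeasure μ] {f g : Ω → ℕ} (hf : Measurable f) (hg : Measurable g)
    (hfg : IndepFun f g μ) : pgf μ (f + g) = pgf μ f * pgf μ g := by
  ext k
  have hpre : (f + g) ⁻¹' {k} = ⋃ p ∈ antidiagonal k, f ⁻¹' {p.1} ∩ g ⁻¹' {p.2} := by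
    ext ω
    simp
  have hdisj : (antidiagonal k : Set (ℕ × ℕ)).PairwiseDisjoint
      fun p => f ⁻¹' {p.1} ∩ g ⁻¹' {p.2} := by
    intro p _ q _ hpq
    refine Set.disjoint_left.mpr fun ω hp hq => hpq ?_
    simp only [Set.mem_inter_iff, Set.mem_preimage, Set.mem_singleton_iff] at hp hq
    exact Prod.ext (hp.1 ▸ hq.1) (hp.2 ▸ hq.2)
  rw [coeff_mul, coeff_pgf, hpre, measureReal_biUnion_finset hdisj
    fun p _ => (hf (measurableSet_singleton _)).inter (hg (measurableSet_singleton _))]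
  refine sum_congr rfl fun p _ => ?_
  rw [coeff_pgf, coeff_pgf, measureReal_def, hfg.measure_inter_preimage_eq_mul _ _
    (measurableSet_singleton _) (measurableSet_singleton _), ENNReal.toReal_mul, measureReal_def,
    measureReal_def]

theorem pgf_sum [IsProbabilityMeasure μ] {ι : Type*} {Z : ι → Ω → ℕ}
    (hZ : ∀ i, Measurable (Z i)) (hindep : iIndepFun Z μ) (s : Finset ι) :
    pgf μ (∑ i ∈ s, Z i) = ∏ i ∈ s, pgf μ (Z i) := by
  classical
  induction s using Finset.induction_on with
  | empty => exact pgf_zero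
  | insert a s ha ih =>
    have hsum : Measurable (∑ i ∈ s, Z i) := by fun_prop
    rw [sum_insert ha, add_comm, pgf_add hsum (hZ a)
      (hindep.indepFun_finsetSum_of_notMem hZ ha), ih, prod_insert ha, mul_comm]

theorem ae_ne_of_coeff_pgf_eq_zero [IsFiniteMeasure μ] {f : Ω → ℕ} {k : ℕ}
    (hk : coeff k (pgf μ f) = 0) : ∀ᵐ ω ∂μ, f ω ≠ k := by
  rw [coeff_pgf, measureReal_eq_zero_iff] at hk
  exact measure_eq_zero_iff_ae_notMem.mp hk

theorem measureReal_le_eq_sum_coeff_pgf [IsFiniteMeasure μ] {f : Ω → ℕ} (hf : Measurable f)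
    (t : ℕ) : μ.real {ω | f ω ≤ t} = ∑ s ∈ range (t + 1), coeff s (pgf μ f) := by
  have hpre : {ω | f ω ≤ t} = ⋃ s ∈ range (t + 1), f ⁻¹' {s} := by
    ext ω
    simp
  rw [hpre, measureReal_biUnion_finset
    (fun s _ r _ hsr => (Set.disjoint_singleton.mpr hsr).preimage f)
    fun s _ => hf (measurableSet_singleton s)]
  simp only [coeff_pgf]

theorem integral_sSup_sum_range_le [IsProbabilityMeasure μ] {Z : ℕ → Ω → ℕ}
    (hZ : ∀ i, Measurable (Z i)) (hpos : ∀ᵐ ω ∂μ, ∀ j, 0 < Z j ω) (t : ℕ) :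
    ∫ ω, ((sSup {n : ℕ | ∑ j ∈ range n, Z j ω ≤ t} : ℕ) : ℝ) ∂μ
      = ∑ n ∈ range (t + 1), μ.real {ω | ∑ j ∈ range n, Z j ω ≤ t} - 1 := by
  have hmeas : ∀ n, MeasurableSet {ω | ∑ j ∈ range n, Z j ω ≤ t} := fun n =>
    measurableSet_le (by fun_prop) measurable_const
  have hint : ∀ n, Integrable ({ω | ∑ j ∈ range n, Z j ω ≤ t}.indicator (1 : Ω → ℝ)) μ :=
    fun n => (integrable_const 1).indicator (hmeas n)
  have hae : (fun ω => ((sSup {n : ℕ | ∑ j ∈ range n, Z j ω ≤ t} : ℕ) : ℝ)) =ᵐ[μ]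
      fun ω => ∑ n ∈ range (t + 1), {ω | ∑ j ∈ range n, Z j ω ≤ t}.indicator 1 ω - 1 := by
    filter_upwards [hpos] with ω hω
    have hσ : StrictMono fun n => ∑ j ∈ range n, Z j ω := strictMono_nat_of_lt_succ fun n => by
      rw [sum_range_succ]
      exact Nat.lt_add_of_pos_right (hω n)
    simp only [Set.indicator_apply, Set.mem_ofPred_eq, Pi.one_apply, sum_boole,
      Nat.card_filter_range_le_eq_sSup_add_one hσ (by simp)]
    push_cast
    ring
  rw [integral_congr_ae hae, integral_sub (integrable_finsetSum _ fun n _ => hint n)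
    (integrable_const 1), integral_finsetSum _ fun n _ => hint n]
  simp [integral_indicator_one (hmeas _)]

end Pgf

theorem sibuya_inverse_mean_general
    {Ω : Type*} [MeasurableSpace Ω] (μ : Measure Ω) [IsProbabilityMeasure μ]
    (α : ℝ)
    (Z : ℕ → Ω → ℕ) (hmeas : ∀ i, Measurable (Z i))
    (hindep : iIndepFun Z μ)
    (hlaw : ∀ i k, (μ {ω | Z i ω = k}).toReal = sibuya α k)
    (S : ℕ → Ω → ℕ) (hS : ∀ n ω, S n ω = ∑ j ∈ Finset.range n, Z j ω)
    (L : ℕ → Ω → ℕ) (hL : ∀ t ω, L t ω = sSup {n : ℕ | S n ω ≤ t})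
    (t : ℕ) :
    ∫ ω, (L t ω : ℝ) ∂μ = gbinom ((t : ℝ) + α) t - 1 := by
  have hpgfZ : ∀ j, pgf μ (Z j) = sibuyaSeries α := fun j => by
    ext k
    rw [coeff_pgf, sibuyaSeries, coeff_mk, measureReal_def]
    exact hlaw j k
  have hSeq : ∀ n, S n = ∑ j ∈ range n, Z j := fun n => funext fun ω => by
    rw [hS, Finset.sum_apply]
  have hpgfS : ∀ n, pgf μ (S n) = sibuyaSeries α ^ n := fun n => by
    rw [hSeq, pgf_sum hmeas hindep, prod_congr rfl fun j _ => hpgfZ j, prod_const, card_range]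
  have hSmeas : ∀ n, Measurable (S n) := fun n => by
    rw [hSeq]
    fun_prop
  have hpos : ∀ᵐ ω ∂μ, ∀ j, 0 < Z j ω := ae_all_iff.mpr fun j =>
    (ae_ne_of_coeff_pgf_eq_zero (by rw [hpgfZ, coeff_zero_eq_constantCoeff_apply,
      constantCoeff_sibuyaSeries])).mono fun ω => Nat.pos_of_ne_zero
  simp_rw [hL, hS]
  rw [integral_sSup_sum_range_le hmeas hpos]
  simp_rw [← hS, measureReal_le_eq_sum_coeff_pgf (hSmeas _), hpgfS]
  rw [sum_comm]
  simp_rw [← map_sum]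
  rw [sum_coeff_sum_range_sibuyaSeries_pow, gbinom_eq_ringChoose, add_comm]

/-- The inverse Sibuya process satisfies
`E[L_α(t)] = binom(t+α, t) - 1` for every `t ∈ ℕ`. -/
theorem sibuya_inverse_mean
    {Ω : Type*} [MeasurableSpace Ω] (μ : Measure Ω) [IsProbabilityMeasure μ]
    (α : ℝ) (hα : α ∈ Set.Ioo (0 : ℝ) 1)
    (Z : ℕ → Ω → ℕ) (hmeas : ∀ i, Measurable (Z i))
    (hindep : iIndepFun Z μ)
    (hlaw : ∀ i k, (μ {ω | Z i ω = k}).toReal = sibuya α k)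
    (S : ℕ → Ω → ℕ) (hS : ∀ n ω, S n ω = ∑ j ∈ Finset.range n, Z j ω)
    (L : ℕ → Ω → ℕ) (hL : ∀ t ω, L t ω = sSup {n : ℕ | S n ω ≤ t})
    (t : ℕ) :
    ∫ ω, (L t ω : ℝ) ∂μ = gbinom ((t : ℝ) + α) t - 1 :=
  sibuya_inverse_mean_general μ α Z hmeas hindep hlaw S hS L hL t
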